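/- arXiv:2006.15070 — 3 statements merged into one kernel-verified Lean document; each statement's English description precedes it below -/
import Mathlib

section
/- Let P, Q be coprime integers greater than 1 and n = PQ. Suppose α, β, γ are integers with α(1−α) ≡ βγ (mod P). Set ᾱ = α + (1−α)P^{φ(Q)}, β̄ = β(1−P^{φ(Q)}), γ̄ = γ(1−P^{φ(Q)}), where φ is Euler's totient function. Then the 2×2 matrix [[ᾱ, β̄],[γ̄, 1−ᾱ]] over Z/n is idempotent. -/
theorem stmt12 (P Q : ℕ) (hP : 1 < P) (hQ : 1 < Q) (hco : Nat.Coprime P Q)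
    (α β γ : ℤ) (h : α * (1 - α) ≡ β * γ [ZMOD (P : ℤ)]) :
    (Matrix.of
      ![![(((α + (1 - α) * (P : ℤ) ^ Q.totient : ℤ) : ZMod (P * Q))),
          ((β * (1 - (P : ℤ) ^ Q.totient) : ℤ) : ZMod (P * Q))],
        ![((γ * (1 - (P : ℤ) ^ Q.totient) : ℤ) : ZMod (P * Q)),
          1 - ((α + (1 - α) * (P : ℤ) ^ Q.totient : ℤ) : ZMod (P * Q))]]) ^ 2
      = Matrix.of
      ![![(((α + (1 - α) * (P : ℤ) ^ Q.totient : ℤ) : ZMod (P * Q))),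
          ((β * (1 - (P : ℤ) ^ Q.totient) : ℤ) : ZMod (P * Q))],
        ![((γ * (1 - (P : ℤ) ^ Q.totient) : ℤ) : ZMod (P * Q)),
          1 - ((α + (1 - α) * (P : ℤ) ^ Q.totient : ℤ) : ZMod (P * Q))]] := by
  set t : ℤ := (P : ℤ) ^ Q.totient with ht
  set A : ℤ := α + (1 - α) * t with hA
  -- key congruence: A * (1 - A) ≡ (β*(1-t)) * (γ*(1-t)) mod P*Q
  have hφ : 0 < Q.totient := Nat.totient_pos.2 (by omega)
  have hPdvd : (P : ℤ) ∣ t := dvd_pow_self _ hφ.ne'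
  have htQ : t ≡ 1 [ZMOD (Q : ℤ)] := by
    have := Nat.ModEq.pow_totient hco
    have : ((P ^ Q.totient : ℕ) : ℤ) ≡ ((1 : ℕ) : ℤ) [ZMOD (Q : ℤ)] :=
      Int.natCast_modEq_iff.2 this
    simpa [ht] using this
  have hco' : (Int.natAbs (P : ℤ)).Coprime (Int.natAbs (Q : ℤ)) := by simpa using hco
  have modP : A * (1 - A) ≡ (β * (1 - t)) * (γ * (1 - t)) [ZMOD (P : ℤ)] := by
      have ht0 : t ≡ 0 [ZMOD (P : ℤ)] := Int.modEq_zero_iff_dvd.2 hPdvd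
      calc A * (1 - A) ≡ (α + (1-α)*0) * (1 - (α + (1-α)*0)) [ZMOD (P:ℤ)] := by
              exact ((Int.ModEq.refl α).add ((Int.ModEq.refl _).mul ht0)).mul
                (((Int.ModEq.refl 1).sub ((Int.ModEq.refl α).add ((Int.ModEq.refl _).mul ht0))))
        _ = α * (1 - α) := by ring
        _ ≡ β * γ [ZMOD (P:ℤ)] := h
        _ = (β * (1 - 0)) * (γ * (1 - 0)) := by ring
        _ ≡ (β * (1 - t)) * (γ * (1 - t)) [ZMOD (P:ℤ)] := by
              exact ((Int.ModEq.refl β).mul ((Int.ModEq.refl 1).sub ht0.symm)).mul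
                ((Int.ModEq.refl γ).mul ((Int.ModEq.refl 1).sub ht0.symm))
  have modQ : A * (1 - A) ≡ (β * (1 - t)) * (γ * (1 - t)) [ZMOD (Q : ℤ)] := by
      calc A * (1 - A) ≡ (α + (1-α)*1) * (1 - (α + (1-α)*1)) [ZMOD (Q:ℤ)] := by
              exact ((Int.ModEq.refl α).add ((Int.ModEq.refl _).mul htQ)).mul
                (((Int.ModEq.refl 1).sub ((Int.ModEq.refl α).add ((Int.ModEq.refl _).mul htQ))))
        _ = 0 := by ring
        _ = (β * (1 - 1)) * (γ * (1 - 1)) := by ring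
        _ ≡ (β * (1 - t)) * (γ * (1 - t)) [ZMOD (Q:ℤ)] := by
              exact ((Int.ModEq.refl β).mul ((Int.ModEq.refl 1).sub htQ.symm)).mul
                ((Int.ModEq.refl γ).mul ((Int.ModEq.refl 1).sub htQ.symm))
  have key : A * (1 - A) ≡ (β * (1 - t)) * (γ * (1 - t)) [ZMOD ((P * Q : ℕ) : ℤ)] := by
    have := (Int.modEq_and_modEq_iff_modEq_mul hco').1 ⟨modP, modQ⟩
    simpa using this
  have keyc : ((A * (1 - A) : ℤ) : ZMod (P * Q)) = (((β * (1 - t)) * (γ * (1 - t)) : ℤ) : ZMod (P * Q)) :=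
    (ZMod.intCast_eq_intCast_iff _ _ _).2 key
  simp only [hA, ht] at keyc
  push_cast at keyc
  ext i j
  fin_cases i <;> fin_cases j
  · simp [pow_two, Matrix.mul_apply, Fin.sum_univ_two]
    simp only [hA, ht]; push_cast
    linear_combination -keyc
  · simp [pow_two, Matrix.mul_apply, Fin.sum_univ_two]
    simp only [hA, ht]; push_cast
    ring
  · simp [pow_two, Matrix.mul_apply, Fin.sum_univ_two]
    simp only [hA, ht]; push_cast
    ring
  · simp [pow_two, Matrix.mul_apply, Fin.sum_univ_two]
    simp only [hA, ht]; push_cast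
    first | linear_combination keyc | linear_combination -keyc | linear_combination 2*keyc | linear_combination -2*keyc
end

section
/- Let A be a commutative ring whose only idempotents are 0 and 1, and let a ∈ M_2(A) be an idempotent matrix that is neither 0 nor the identity. Then det(a) = 0 and tr(a) = 1. -/
theorem stmt15 (A : Type*) [CommRing A]
    (h : ∀ e : A, e ^ 2 = e → e = 0 ∨ e = 1)
    (a : Matrix (Fin 2) (Fin 2) A) (ha : a ^ 2 = a)
    (h0 : a ≠ 0) (h1 : a ≠ 1) :
    a.det = 0 ∧ a.trace = 1 := by
  have haa : a * a = a := by rw [← sq]; exact ha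
  have hdet : a.det ^ 2 = a.det := by rw [← Matrix.det_pow, ha]
  have hd : a.det = 0 := by
    rcases h a.det hdet with hd | hd
    · exact hd
    · exfalso
      have hu : IsUnit a := (Matrix.isUnit_iff_isUnit_det a).2 (hd ▸ isUnit_one)
      exact h1 (hu.mul_left_cancel (by rw [haa, mul_one]))
  have e00 := congrFun (congrFun haa 0) 0
  have e01 := congrFun (congrFun haa 0) 1
  have e10 := congrFun (congrFun haa 1) 0
  have e11 := congrFun (congrFun haa 1) 1
  simp only [Matrix.mul_apply, Fin.sum_univ_two] at e00 e01 e10 e11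
  rw [Matrix.det_fin_two] at hd
  have ht : (a 0 0 + a 1 1) ^ 2 = a 0 0 + a 1 1 := by
    linear_combination e00 + e11 + 2 * hd
  rcases h _ ht with ht0 | ht1
  · exfalso
    have hx : a 0 0 = 0 := by linear_combination -e00 - hd + a 0 0 * ht0
    have hy : a 0 1 = 0 := by linear_combination a 0 1 * ht0 - e01
    have hz : a 1 0 = 0 := by linear_combination a 1 0 * ht0 - e10
    have hw : a 1 1 = 0 := by linear_combination ht0 - hx
    apply h0
    ext i j
    fin_cases i <;> fin_cases j <;> simp [hx, hy, hz, hw]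
  · refine ⟨by rw [Matrix.det_fin_two]; exact hd, ?_⟩
    rw [Matrix.trace_fin_two]
    exact ht1
end

section
/- Let n = PQR with P, Q, R pairwise coprime positive integers, all > 1, and let α, β, γ ∈ Z satisfy α(1−α) ≡ βγ (mod P). Define ᾱ = (α + (1−α)P^{φ(Q)})(1 − (PQ)^{φ(R)}), β̄ = β(1 − P^{φ(Q)φ(R)}), γ̄ = γ(1 − P^{φ(Q)φ(R)}). Then the matrix [[ᾱ, β̄],[γ̄, 1−ᾱ]] over Z/n is idempotent. -/
theorem stmt17 (P Q R : ℕ) (hP : 1 < P) (hQ : 1 < Q) (hR : 1 < R)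
    (hPQ : Nat.Coprime P Q) (hPR : Nat.Coprime P R) (hQR : Nat.Coprime Q R)
    (α β γ : ℤ) (h : α * (1 - α) ≡ β * γ [ZMOD (P : ℤ)]) :
    (Matrix.of
      ![![((((α + (1 - α) * (P : ℤ) ^ Q.totient) * (1 - ((P : ℤ) * Q) ^ R.totient) : ℤ) : ZMod (P * Q * R))),
          ((β * (1 - (P : ℤ) ^ (Q.totient * R.totient)) : ℤ) : ZMod (P * Q * R))],
        ![((γ * (1 - (P : ℤ) ^ (Q.totient * R.totient)) : ℤ) : ZMod (P * Q * R)),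
          1 - ((((α + (1 - α) * (P : ℤ) ^ Q.totient) * (1 - ((P : ℤ) * Q) ^ R.totient) : ℤ) : ZMod (P * Q * R)))]]) ^ 2
      = Matrix.of
      ![![((((α + (1 - α) * (P : ℤ) ^ Q.totient) * (1 - ((P : ℤ) * Q) ^ R.totient) : ℤ) : ZMod (P * Q * R))),
          ((β * (1 - (P : ℤ) ^ (Q.totient * R.totient)) : ℤ) : ZMod (P * Q * R))],
        ![((γ * (1 - (P : ℤ) ^ (Q.totient * R.totient)) : ℤ) : ZMod (P * Q * R)),
          1 - ((((α + (1 - α) * (P : ℤ) ^ Q.totient) * (1 - ((P : ℤ) * Q) ^ R.totient) : ℤ) : ZMod (P * Q * R)))]] := by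
  set a : ℤ := (α + (1 - α) * (P : ℤ) ^ Q.totient) * (1 - ((P : ℤ) * Q) ^ R.totient) with ha
  set b : ℤ := β * (1 - (P : ℤ) ^ (Q.totient * R.totient)) with hb
  set c : ℤ := γ * (1 - (P : ℤ) ^ (Q.totient * R.totient)) with hc
  have hφQ : 0 < Q.totient := Nat.totient_pos.mpr (by omega)
  have hφR : 0 < R.totient := Nat.totient_pos.mpr (by omega)
  have hPdvd : (P : ℤ) ∣ (P : ℤ) ^ Q.totient := dvd_pow_self _ (by omega)
  have hPdvd2 : (P : ℤ) ∣ (P : ℤ) ^ (Q.totient * R.totient) :=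
    dvd_pow_self _ (by positivity)
  have hPdvd3 : (P : ℤ) ∣ ((P : ℤ) * Q) ^ R.totient :=
    dvd_trans (dvd_mul_right _ _) (dvd_pow_self _ (by omega))
  -- Euler mod Q
  have eQ : (P : ℤ) ^ Q.totient ≡ 1 [ZMOD (Q : ℤ)] := by
    have := Int.natCast_modEq_iff.mpr (Nat.ModEq.pow_totient hPQ)
    push_cast at this; exact this
  have eR : ((P : ℤ) * Q) ^ R.totient ≡ 1 [ZMOD (R : ℤ)] := by
    have hcop : Nat.Coprime (P * Q) R := Nat.Coprime.mul hPR hQR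
    have := Int.natCast_modEq_iff.mpr (Nat.ModEq.pow_totient hcop)
    push_cast at this; exact this
  have eR' : (P : ℤ) ^ (Q.totient * R.totient) ≡ 1 [ZMOD (R : ℤ)] := by
    have h1 : (P : ℤ) ^ R.totient ≡ 1 [ZMOD (R : ℤ)] := by
      have := Int.natCast_modEq_iff.mpr (Nat.ModEq.pow_totient hPR)
      push_cast at this; exact this
    calc (P : ℤ) ^ (Q.totient * R.totient) = ((P:ℤ) ^ R.totient) ^ Q.totient := by
            rw [← pow_mul, Nat.mul_comm]
      _ ≡ 1 ^ Q.totient [ZMOD (R:ℤ)] := h1.pow _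
      _ = 1 := one_pow _
  have eQ' : (P : ℤ) ^ (Q.totient * R.totient) ≡ 1 [ZMOD (Q : ℤ)] := by
    calc (P : ℤ) ^ (Q.totient * R.totient) = ((P:ℤ) ^ Q.totient) ^ R.totient := by
            rw [← pow_mul]
      _ ≡ 1 ^ R.totient [ZMOD (Q:ℤ)] := eQ.pow _
      _ = 1 := one_pow _
  have eQ2 : ((P : ℤ) * Q) ^ R.totient ≡ 0 [ZMOD (Q : ℤ)] :=
    Int.modEq_zero_iff_dvd.mpr
      (dvd_trans (dvd_mul_left _ _) (dvd_pow_self _ (by omega)))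
  -- key congruence mod each prime-part
  have kP : a * (1 - a) ≡ b * c [ZMOD (P : ℤ)] := by
    have h0 : (P:ℤ) ^ Q.totient ≡ 0 [ZMOD (P:ℤ)] := Int.modEq_zero_iff_dvd.mpr hPdvd
    have h1 : (P:ℤ) ^ (Q.totient * R.totient) ≡ 0 [ZMOD (P:ℤ)] := Int.modEq_zero_iff_dvd.mpr hPdvd2
    have h2 : ((P:ℤ) * Q) ^ R.totient ≡ 0 [ZMOD (P:ℤ)] := Int.modEq_zero_iff_dvd.mpr hPdvd3
    have ha' : a ≡ α [ZMOD (P:ℤ)] := by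
      calc a ≡ (α + (1 - α) * 0) * (1 - 0) [ZMOD (P:ℤ)] :=
            ((Int.ModEq.refl α).add ((Int.ModEq.refl _).mul h0)).mul ((Int.ModEq.refl 1).sub h2)
        _ = α := by ring
    have hb' : b ≡ β [ZMOD (P:ℤ)] := by
      calc b ≡ β * (1 - 0) [ZMOD (P:ℤ)] := (Int.ModEq.refl β).mul ((Int.ModEq.refl 1).sub h1)
        _ = β := by ring
    have hc' : c ≡ γ [ZMOD (P:ℤ)] := by
      calc c ≡ γ * (1 - 0) [ZMOD (P:ℤ)] := (Int.ModEq.refl γ).mul ((Int.ModEq.refl 1).sub h1)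
        _ = γ := by ring
    calc a * (1 - a) ≡ α * (1 - α) [ZMOD (P:ℤ)] := ha'.mul ((Int.ModEq.refl 1).sub ha')
      _ ≡ β * γ [ZMOD (P:ℤ)] := h
      _ ≡ b * c [ZMOD (P:ℤ)] := (hb'.mul hc').symm
  have kQ : a * (1 - a) ≡ b * c [ZMOD (Q : ℤ)] := by
    have ha' : a ≡ 1 [ZMOD (Q:ℤ)] := by
      calc a ≡ (α + (1 - α) * 1) * (1 - 0) [ZMOD (Q:ℤ)] :=
            ((Int.ModEq.refl α).add ((Int.ModEq.refl _).mul eQ)).mul ((Int.ModEq.refl 1).sub eQ2)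
        _ = 1 := by ring
    have hb' : b ≡ 0 [ZMOD (Q:ℤ)] := by
      calc b ≡ β * (1 - 1) [ZMOD (Q:ℤ)] := (Int.ModEq.refl β).mul ((Int.ModEq.refl 1).sub eQ')
        _ = 0 := by ring
    have hc' : c ≡ 0 [ZMOD (Q:ℤ)] := by
      calc c ≡ γ * (1 - 1) [ZMOD (Q:ℤ)] := (Int.ModEq.refl γ).mul ((Int.ModEq.refl 1).sub eQ')
        _ = 0 := by ring
    calc a * (1 - a) ≡ 1 * (1 - 1) [ZMOD (Q:ℤ)] := ha'.mul ((Int.ModEq.refl 1).sub ha')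
      _ = 0 * 0 := by ring
      _ ≡ b * c [ZMOD (Q:ℤ)] := (hb'.mul hc').symm
  have kR : a * (1 - a) ≡ b * c [ZMOD (R : ℤ)] := by
    have ha' : a ≡ 0 [ZMOD (R:ℤ)] := by
      calc a ≡ (α + (1 - α) * (P : ℤ) ^ Q.totient) * (1 - 1) [ZMOD (R:ℤ)] :=
            (Int.ModEq.refl _).mul ((Int.ModEq.refl 1).sub eR)
        _ = 0 := by ring
    have hb' : b ≡ 0 [ZMOD (R:ℤ)] := by
      calc b ≡ β * (1 - 1) [ZMOD (R:ℤ)] := (Int.ModEq.refl β).mul ((Int.ModEq.refl 1).sub eR')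
        _ = 0 := by ring
    have hc' : c ≡ 0 [ZMOD (R:ℤ)] := by
      calc c ≡ γ * (1 - 1) [ZMOD (R:ℤ)] := (Int.ModEq.refl γ).mul ((Int.ModEq.refl 1).sub eR')
        _ = 0 := by ring
    calc a * (1 - a) ≡ 0 * (1 - 0) [ZMOD (R:ℤ)] := ha'.mul ((Int.ModEq.refl 1).sub ha')
      _ = 0 * 0 := by ring
      _ ≡ b * c [ZMOD (R:ℤ)] := (hb'.mul hc').symm
  -- combine via CRT
  have hPQ' : IsCoprime (P:ℤ) (Q:ℤ) := Int.isCoprime_iff_gcd_eq_one.mpr hPQ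
  have kPQ : a * (1 - a) ≡ b * c [ZMOD ((P:ℤ) * Q)] := by
    rw [← Int.modEq_and_modEq_iff_modEq_mul (by exact_mod_cast hPQ)]
    exact ⟨kP, kQ⟩
  have kn : a * (1 - a) ≡ b * c [ZMOD ((P:ℤ) * Q * R)] := by
    rw [← Int.modEq_and_modEq_iff_modEq_mul
      (by exact_mod_cast (Nat.Coprime.mul hPR hQR))]
    exact ⟨kPQ, kR⟩
  have kn' : a * (1 - a) ≡ b * c [ZMOD ((P * Q * R : ℕ) : ℤ)] := by
    have hcast : ((P * Q * R : ℕ) : ℤ) = (P:ℤ) * Q * R := by push_cast; ring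
    rw [hcast]; exact kn
  have key : ((a * (1 - a) : ℤ) : ZMod (P * Q * R)) = ((b * c : ℤ) : ZMod (P * Q * R)) :=
    (ZMod.intCast_eq_intCast_iff _ _ (P * Q * R)).mpr kn'
  ext i j
  fin_cases i <;> fin_cases j <;>
    simp [pow_two, Matrix.mul_apply, Fin.sum_univ_two] <;>
    first
      | linear_combination (norm := (push_cast; ring1)) key
      | linear_combination (norm := (push_cast; ring1)) (-1 : ZMod (P*Q*R)) * key
      | linear_combination (norm := (push_cast; ring1)) (0 : ZMod (P*Q*R)) * key
end
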